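/- Let Γ be the 'Santa's house with broken roof' graph on vertices {1,…,5} with edge set {{1,2},{1,3},{1,4},{1,5},{2,3},{2,4},{3,4}}. Then for every unital associative ℂ-algebra A, every matrix u ∈ M₅(A) satisfying the quantum automorphism relations for Γ satisfies u_{11} = 1, u_{55} = 1, u_{1j} = u_{j1} = 0 for all j ≠ 1, and u_{5j} = u_{j5} = 0 for all j ≠ 5 (so u is the direct sum of 1, a 3×3 magic matrix on the block {2,3,4}, and 1). -/
import Mathlib


open Matrix

/-- A matrix `u` over a (unital, associative) ring is a *magic matrix*. -/
def IsMagic {V : Type*} [Fintype V] [DecidableEq V] {A : Type*} [Ring A]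
    (u : Matrix V V A) : Prop :=
  (∀ i j k, u i j * u i k = if j = k then u i j else 0) ∧
  (∀ i j k, u j i * u k i = if j = k then u j i else 0) ∧
  (∀ i, ∑ k, u i k = 1) ∧
  (∀ i, ∑ k, u k i = 1)

/-- `u` satisfies the quantum automorphism relations for the graph `Γ`. -/
def QuantumRel {V : Type*} [Fintype V] [DecidableEq V] (Γ : SimpleGraph V)
    {A : Type*} [Ring A] (u : Matrix V V A) : Prop :=
  IsMagic u ∧
    ∀ i j k l, ¬ (Γ.Adj i j ↔ Γ.Adj k l) → u i k * u j l = 0 ∧ u j l * u i k = 0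

/-- "Santa's house with broken roof": the graph on vertices `{1,…,5}` (here `{0,…,4}`)
with edges `{1,2},{1,3},{1,4},{1,5},{2,3},{2,4},{3,4}`
(here `{0,1},{0,2},{0,3},{0,4},{1,2},{1,3},{2,3}`). -/
def santasHouseBrokenRoof : SimpleGraph (Fin 5) :=
  SimpleGraph.fromRel (fun i j =>
    (i = 0 ∧ j = 1) ∨ (i = 0 ∧ j = 2) ∨ (i = 0 ∧ j = 3) ∨ (i = 0 ∧ j = 4) ∨
    (i = 1 ∧ j = 2) ∨ (i = 1 ∧ j = 3) ∨ (i = 2 ∧ j = 3))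

instance : DecidableRel santasHouseBrokenRoof.Adj := fun i j =>
  decidable_of_iff _ (SimpleGraph.fromRel_adj _ i j).symm

/-- Every matrix `u ∈ M₅(A)` over a unital associative `ℂ`-algebra `A` satisfying the
quantum automorphism relations for Santa's house with broken roof satisfies
`u₁₁ = 1`, `u₅₅ = 1`, `u₁ⱼ = uⱼ₁ = 0` for `j ≠ 1` and `u₅ⱼ = uⱼ₅ = 0` for `j ≠ 5`,
so `u` is the direct sum of `1`, a `3 × 3` magic matrix on the block `{2,3,4}`,
and `1`. -/
theorem santasHouseBrokenRoof_quantum_form (A : Type*) [Ring A] [Algebra ℂ A]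
    (u : Matrix (Fin 5) (Fin 5) A) (hu : QuantumRel santasHouseBrokenRoof u) :
    u 0 0 = 1 ∧ u 4 4 = 1 ∧
    (∀ j : Fin 5, j ≠ 0 → u 0 j = 0 ∧ u j 0 = 0) ∧
    (∀ j : Fin 5, j ≠ 4 → u 4 j = 0 ∧ u j 4 = 0) := by
  obtain ⟨⟨hr, hc, hsr, hsc⟩, hadj⟩ := hu
  have colz : ∀ i j k : Fin 5, j ≠ k → u j i * u k i = 0 := by
    intro i j k hjk
    simpa [hjk] using hc i j k
  have expand : ∀ a b j : Fin 5, u a b =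
      u a b * u j 0 + u a b * u j 1 + u a b * u j 2 + u a b * u j 3 + u a b * u j 4 := by
    intro a b j
    have h := hsr j
    rw [Fin.sum_univ_five] at h
    rw [← mul_add, ← mul_add, ← mul_add, ← mul_add, h, mul_one]
  -- h40 : u 4 0 = 0
  have h40 : u 4 0 = 0 := by
    have e1 : u 4 0 = u 4 0 * u 1 0 := by
      have h := expand 4 0 1
      rw [(hadj 4 1 0 1 (by decide)).1, (hadj 4 1 0 2 (by decide)).1,
          (hadj 4 1 0 3 (by decide)).1, (hadj 4 1 0 4 (by decide)).1] at h
      simpa using h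
    have e2 : u 4 0 = u 4 0 * u 2 0 := by
      have h := expand 4 0 2
      rw [(hadj 4 2 0 1 (by decide)).1, (hadj 4 2 0 2 (by decide)).1,
          (hadj 4 2 0 3 (by decide)).1, (hadj 4 2 0 4 (by decide)).1] at h
      simpa using h
    calc u 4 0 = u 4 0 * u 1 0 := e1
      _ = (u 4 0 * u 2 0) * u 1 0 := by rw [← e2]
      _ = u 4 0 * (u 2 0 * u 1 0) := mul_assoc _ _ _
      _ = 0 := by rw [colz 0 2 1 (by decide), mul_zero]
  -- h04 : u 0 4 = 0
  have h04 : u 0 4 = 0 := by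
    have e1 : u 0 4 = u 0 4 * u 1 0 := by
      have h := expand 0 4 1
      rw [(hadj 0 1 4 1 (by decide)).1, (hadj 0 1 4 2 (by decide)).1,
          (hadj 0 1 4 3 (by decide)).1, (hadj 0 1 4 4 (by decide)).1] at h
      simpa using h
    have e2 : u 0 4 = u 0 4 * u 2 0 := by
      have h := expand 0 4 2
      rw [(hadj 0 2 4 1 (by decide)).1, (hadj 0 2 4 2 (by decide)).1,
          (hadj 0 2 4 3 (by decide)).1, (hadj 0 2 4 4 (by decide)).1] at h
      simpa using h
    calc u 0 4 = u 0 4 * u 1 0 := e1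
      _ = (u 0 4 * u 2 0) * u 1 0 := by rw [← e2]
      _ = u 0 4 * (u 2 0 * u 1 0) := mul_assoc _ _ _
      _ = 0 := by rw [colz 0 2 1 (by decide), mul_zero]
  -- h14 : u 1 4 = 0
  have h14 : u 1 4 = 0 := by
    have e1 : u 1 4 = u 1 4 * u 2 0 := by
      have h := expand 1 4 2
      rw [(hadj 1 2 4 1 (by decide)).1, (hadj 1 2 4 2 (by decide)).1,
          (hadj 1 2 4 3 (by decide)).1, (hadj 1 2 4 4 (by decide)).1] at h
      simpa using h
    have e2 : u 1 4 = u 1 4 * u 3 0 := by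
      have h := expand 1 4 3
      rw [(hadj 1 3 4 1 (by decide)).1, (hadj 1 3 4 2 (by decide)).1,
          (hadj 1 3 4 3 (by decide)).1, (hadj 1 3 4 4 (by decide)).1] at h
      simpa using h
    calc u 1 4 = u 1 4 * u 2 0 := e1
      _ = (u 1 4 * u 3 0) * u 2 0 := by rw [← e2]
      _ = u 1 4 * (u 3 0 * u 2 0) := mul_assoc _ _ _
      _ = 0 := by rw [colz 0 3 2 (by decide), mul_zero]
  -- h24 : u 2 4 = 0
  have h24 : u 2 4 = 0 := by
    have e1 : u 2 4 = u 2 4 * u 1 0 := by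
      have h := expand 2 4 1
      rw [(hadj 2 1 4 1 (by decide)).1, (hadj 2 1 4 2 (by decide)).1,
          (hadj 2 1 4 3 (by decide)).1, (hadj 2 1 4 4 (by decide)).1] at h
      simpa using h
    have e2 : u 2 4 = u 2 4 * u 3 0 := by
      have h := expand 2 4 3
      rw [(hadj 2 3 4 1 (by decide)).1, (hadj 2 3 4 2 (by decide)).1,
          (hadj 2 3 4 3 (by decide)).1, (hadj 2 3 4 4 (by decide)).1] at h
      simpa using h
    calc u 2 4 = u 2 4 * u 1 0 := e1
      _ = (u 2 4 * u 3 0) * u 1 0 := by rw [← e2]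
      _ = u 2 4 * (u 3 0 * u 1 0) := mul_assoc _ _ _
      _ = 0 := by rw [colz 0 3 1 (by decide), mul_zero]
  -- h34 : u 3 4 = 0
  have h34 : u 3 4 = 0 := by
    have e1 : u 3 4 = u 3 4 * u 1 0 := by
      have h := expand 3 4 1
      rw [(hadj 3 1 4 1 (by decide)).1, (hadj 3 1 4 2 (by decide)).1,
          (hadj 3 1 4 3 (by decide)).1, (hadj 3 1 4 4 (by decide)).1] at h
      simpa using h
    have e2 : u 3 4 = u 3 4 * u 2 0 := by
      have h := expand 3 4 2
      rw [(hadj 3 2 4 1 (by decide)).1, (hadj 3 2 4 2 (by decide)).1,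
          (hadj 3 2 4 3 (by decide)).1, (hadj 3 2 4 4 (by decide)).1] at h
      simpa using h
    calc u 3 4 = u 3 4 * u 1 0 := e1
      _ = (u 3 4 * u 2 0) * u 1 0 := by rw [← e2]
      _ = u 3 4 * (u 2 0 * u 1 0) := mul_assoc _ _ _
      _ = 0 := by rw [colz 0 2 1 (by decide), mul_zero]
  -- h41 : u 4 1 = 0
  have h41 : u 4 1 = 0 := by
    have e1 : u 4 1 = u 4 1 * (u 1 1 + u 1 4) := by
      have h := expand 4 1 1
      rw [(hadj 4 1 1 0 (by decide)).1, (hadj 4 1 1 2 (by decide)).1,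
          (hadj 4 1 1 3 (by decide)).1] at h
      rw [mul_add]
      simpa using h
    have e2 : u 4 1 = u 4 1 * (u 2 1 + u 2 4) := by
      have h := expand 4 1 2
      rw [(hadj 4 2 1 0 (by decide)).1, (hadj 4 2 1 2 (by decide)).1,
          (hadj 4 2 1 3 (by decide)).1] at h
      rw [mul_add]
      simpa using h
    have hz : (u 2 1 + u 2 4) * (u 1 1 + u 1 4) = 0 := by
      rw [add_mul, mul_add, mul_add, colz 1 2 1 (by decide),
        (hadj 2 1 1 4 (by decide)).1, (hadj 2 1 4 1 (by decide)).1,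
        colz 4 2 1 (by decide)]
      simp
    calc u 4 1 = u 4 1 * (u 1 1 + u 1 4) := e1
      _ = (u 4 1 * (u 2 1 + u 2 4)) * (u 1 1 + u 1 4) := by rw [← e2]
      _ = u 4 1 * ((u 2 1 + u 2 4) * (u 1 1 + u 1 4)) := mul_assoc _ _ _
      _ = 0 := by rw [hz, mul_zero]
  -- h42 : u 4 2 = 0
  have h42 : u 4 2 = 0 := by
    have e1 : u 4 2 = u 4 2 * (u 1 2 + u 1 4) := by
      have h := expand 4 2 1
      rw [(hadj 4 1 2 0 (by decide)).1, (hadj 4 1 2 1 (by decide)).1,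
          (hadj 4 1 2 3 (by decide)).1] at h
      rw [mul_add]
      simpa using h
    have e2 : u 4 2 = u 4 2 * (u 3 2 + u 3 4) := by
      have h := expand 4 2 3
      rw [(hadj 4 3 2 0 (by decide)).1, (hadj 4 3 2 1 (by decide)).1,
          (hadj 4 3 2 3 (by decide)).1] at h
      rw [mul_add]
      simpa using h
    have hz : (u 3 2 + u 3 4) * (u 1 2 + u 1 4) = 0 := by
      rw [add_mul, mul_add, mul_add, colz 2 3 1 (by decide),
        (hadj 3 1 2 4 (by decide)).1, (hadj 3 1 4 2 (by decide)).1,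
        colz 4 3 1 (by decide)]
      simp
    calc u 4 2 = u 4 2 * (u 1 2 + u 1 4) := e1
      _ = (u 4 2 * (u 3 2 + u 3 4)) * (u 1 2 + u 1 4) := by rw [← e2]
      _ = u 4 2 * ((u 3 2 + u 3 4) * (u 1 2 + u 1 4)) := mul_assoc _ _ _
      _ = 0 := by rw [hz, mul_zero]
  -- h43 : u 4 3 = 0
  have h43 : u 4 3 = 0 := by
    have e1 : u 4 3 = u 4 3 * (u 1 3 + u 1 4) := by
      have h := expand 4 3 1
      rw [(hadj 4 1 3 0 (by decide)).1, (hadj 4 1 3 1 (by decide)).1,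
          (hadj 4 1 3 2 (by decide)).1] at h
      rw [mul_add]
      simpa using h
    have e2 : u 4 3 = u 4 3 * (u 2 3 + u 2 4) := by
      have h := expand 4 3 2
      rw [(hadj 4 2 3 0 (by decide)).1, (hadj 4 2 3 1 (by decide)).1,
          (hadj 4 2 3 2 (by decide)).1] at h
      rw [mul_add]
      simpa using h
    have hz : (u 2 3 + u 2 4) * (u 1 3 + u 1 4) = 0 := by
      rw [add_mul, mul_add, mul_add, colz 3 2 1 (by decide),
        (hadj 2 1 3 4 (by decide)).1, (hadj 2 1 4 3 (by decide)).1,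
        colz 4 2 1 (by decide)]
      simp
    calc u 4 3 = u 4 3 * (u 1 3 + u 1 4) := e1
      _ = (u 4 3 * (u 2 3 + u 2 4)) * (u 1 3 + u 1 4) := by rw [← e2]
      _ = u 4 3 * ((u 2 3 + u 2 4) * (u 1 3 + u 1 4)) := mul_assoc _ _ _
      _ = 0 := by rw [hz, mul_zero]
  -- h10, h20, h30
  have h10 : u 1 0 = 0 := by
    have h := expand 1 0 4
    rw [(hadj 1 4 0 1 (by decide)).1, (hadj 1 4 0 2 (by decide)).1,
        (hadj 1 4 0 3 (by decide)).1, (hadj 1 4 0 4 (by decide)).1, h40] at h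
    simpa using h
  have h20 : u 2 0 = 0 := by
    have h := expand 2 0 4
    rw [(hadj 2 4 0 1 (by decide)).1, (hadj 2 4 0 2 (by decide)).1,
        (hadj 2 4 0 3 (by decide)).1, (hadj 2 4 0 4 (by decide)).1, h40] at h
    simpa using h
  have h30 : u 3 0 = 0 := by
    have h := expand 3 0 4
    rw [(hadj 3 4 0 1 (by decide)).1, (hadj 3 4 0 2 (by decide)).1,
        (hadj 3 4 0 3 (by decide)).1, (hadj 3 4 0 4 (by decide)).1, h40] at h
    simpa using h
  -- h01, h02, h03
  have h01 : u 0 1 = 0 := by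
    have h := expand 0 1 4
    rw [(hadj 0 4 1 1 (by decide)).1, (hadj 0 4 1 4 (by decide)).1,
        h40, h42, h43] at h
    simpa using h
  have h02 : u 0 2 = 0 := by
    have h := expand 0 2 4
    rw [(hadj 0 4 2 2 (by decide)).1, (hadj 0 4 2 4 (by decide)).1,
        h40, h41, h43] at h
    simpa using h
  have h03 : u 0 3 = 0 := by
    have h := expand 0 3 4
    rw [(hadj 0 4 3 3 (by decide)).1, (hadj 0 4 3 4 (by decide)).1,
        h40, h41, h42] at h
    simpa using h
  -- diagonal entries
  have h00 : u 0 0 = 1 := by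
    have h := hsr 0
    rw [Fin.sum_univ_five, h01, h02, h03, h04] at h
    simpa using h
  have h44 : u 4 4 = 1 := by
    have h := hsr 4
    rw [Fin.sum_univ_five, h40, h41, h42, h43] at h
    simpa using h
  refine ⟨h00, h44, ?_, ?_⟩
  · intro j hj
    fin_cases j
    · exact absurd rfl hj
    · exact ⟨h01, h10⟩
    · exact ⟨h02, h20⟩
    · exact ⟨h03, h30⟩
    · exact ⟨h04, h40⟩
  · intro j hj
    fin_cases j
    · exact ⟨h40, h04⟩
    · exact ⟨h41, h14⟩
    · exact ⟨h42, h24⟩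
    · exact ⟨h43, h34⟩
    · exact absurd rfl hj
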